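/- arXiv:1202.3501 — 2 statements merged into one kernel-verified Lean document; each statement's English description precedes it below -/
import Mathlib

section
/- For all natural numbers h ≤ k: if μX.A is a formula of L0 with lev(μX.A) = h, then the sequent μX.A, (¬μX.A)' has a cut-free derivation in the system M^Ω_k. -/
/-!
Apply `Ω_h` to `(¬μX.A)'`: it remains to turn a cut-free `M^Ω_{k-1}`-derivation of
`Δ, (μX.A)'`, for `h`-positive `Δ`, into a cut-free `M^Ω_k`-derivation of `Δ, μX.A`.
This transfer runs by induction on the derivation, reading primed formulas as their `L0`
originals where the target demands it. An Ω-inference on `ν̃X.(¬C)'` read as `νX.¬C` becomes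
an ω-rule inference, fed by the identities `(μX.C)', ((¬C)^i(⊤))'`. The Ω-premises of the
target quantify over derivations one level higher than those of the source, so these are
lowered again; this works because they carry no `ν̃` of the top level. Transfer (in particular
the embedding of `M^Ω_m` into `M^Ω_{m+1}`) and lowering are proved together by induction on `m`.
-/

namespace OneVarMu

/-- Operator forms of the language `L_Ω` (one fixed variable `X`, written `var`).
`nut` is the auxiliary fixed-point connective `ν̃`; `L0` operator forms are the
`nut`-free ones. -/
inductive Form : Type
  | atom  : ℕ → Form          -- p_i
  | natom : ℕ → Form          -- p̄_i
  | var   : Form              -- X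
  | and   : Form → Form → Form
  | or    : Form → Form → Form
  | box   : Form → Form
  | dia   : Form → Form
  | mu    : Form → Form       -- μX.A
  | nu    : Form → Form       -- νX.A
  | nut   : Form → Form       -- ν̃X.A
  deriving DecidableEq

namespace Form

/-- Negation `¬A` (on `ν̃` we extend the `L0` definition as for `ν`). -/
def compl : Form → Form
  | atom i  => natom i
  | natom i => atom i
  | var     => var
  | and A B => or (compl A) (compl B)
  | or A B  => and (compl A) (compl B)
  | box A   => dia (compl A)
  | dia A   => box (compl A)
  | mu A    => nu (compl A)
  | nu A    => mu (compl A)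
  | nut A   => mu (compl A)

/-- `subst A B` is `A(B)`: substitute `B` for every free occurrence of `X` in `A`. -/
def subst : Form → Form → Form
  | atom i, _  => atom i
  | natom i, _ => natom i
  | var, B     => B
  | and A1 A2, B => and (subst A1 B) (subst A2 B)
  | or A1 A2, B  => or (subst A1 B) (subst A2 B)
  | box A, B   => box (subst A B)
  | dia A, B   => dia (subst A B)
  | mu A, _    => mu A
  | nu A, _    => nu A
  | nut A, _   => nut A

/-- The level of an operator form: maximal nesting of fixed-point operators. -/
def lev : Form → ℕ
  | atom _  => 0
  | natom _ => 0
  | var     => 0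
  | and A B => max (lev A) (lev B)
  | or A B  => max (lev A) (lev B)
  | box A   => lev A
  | dia A   => lev A
  | mu A    => lev A + 1
  | nu A    => lev A + 1
  | nut A   => lev A + 1

/-- `A'`: replace every occurrence of `νX` by `ν̃X`. -/
def prime : Form → Form
  | atom i  => atom i
  | natom i => natom i
  | var     => var
  | and A B => and (prime A) (prime B)
  | or A B  => or (prime A) (prime B)
  | box A   => box (prime A)
  | dia A   => dia (prime A)
  | mu A    => mu (prime A)
  | nu A    => nut (prime A)
  | nut A   => nut (prime A)

/-- `A` is an operator form of `L0`, i.e. contains no `ν̃`. -/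
def IsL0 : Form → Prop
  | and A B => IsL0 A ∧ IsL0 B
  | or A B  => IsL0 A ∧ IsL0 B
  | box A   => IsL0 A
  | dia A   => IsL0 A
  | mu A    => IsL0 A
  | nu A    => IsL0 A
  | nut _   => False
  | _       => True

/-- `A` has no free occurrence of the variable `X`, i.e. `A` is a formula. -/
def ClosedF : Form → Prop
  | var     => False
  | and A B => ClosedF A ∧ ClosedF B
  | or A B  => ClosedF A ∧ ClosedF B
  | box A   => ClosedF A
  | dia A   => ClosedF A
  | _       => True

/-- `⊤ := p ∨ p̄` for a fixed atomic proposition. -/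
def top : Form := or (atom 0) (natom 0)

/-- Finite iterations `A^i(⊤)`. -/
def iter (A : Form) : ℕ → Form
  | 0     => top
  | n + 1 => subst A (iter A n)

/-- `OccursIn A B`: the operator form `A` occurs (as a subterm) in `B`. -/
def OccursIn (A : Form) : Form → Prop
  | atom i  => A = atom i
  | natom i => A = natom i
  | var     => A = var
  | and C D => A = and C D ∨ OccursIn A C ∨ OccursIn A D
  | or C D  => A = or C D ∨ OccursIn A C ∨ OccursIn A D
  | box C   => A = box C ∨ OccursIn A C
  | dia C   => A = dia C ∨ OccursIn A C
  | mu C    => A = mu C ∨ OccursIn A C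
  | nu C    => A = nu C ∨ OccursIn A C
  | nut C   => A = nut C ∨ OccursIn A C

/-- `replace t r A`: simultaneously replace every occurrence of `t` in `A` by `r`. -/
def replace (t r : Form) : Form → Form
  | and A B => if and A B = t then r else and (replace t r A) (replace t r B)
  | or A B  => if or A B = t then r else or (replace t r A) (replace t r B)
  | box A   => if box A = t then r else box (replace t r A)
  | dia A   => if dia A = t then r else dia (replace t r A)
  | mu A    => if mu A = t then r else mu (replace t r A)
  | nu A    => if nu A = t then r else nu (replace t r A)
  | nut A   => if nut A = t then r else nut (replace t r A)
  | A       => if A = t then r else A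

end Form

/-- Sequents are finite sets of formulae. -/
abbrev Sequent := Finset Form

/-- Every member is a formula (no free `X`): a sequent of `L_Ω`. -/
def ClosedSeq (Γ : Sequent) : Prop := ∀ C ∈ Γ, C.ClosedF

/-- A sequent of `L0`: every member is a `ν̃`-free formula. -/
def L0Seq (Γ : Sequent) : Prop := ∀ C ∈ Γ, C.IsL0 ∧ C.ClosedF

/-- `Γ` is `h`-positive: every `ν̃X.A` occurring in it has level `< h`. -/
def Positive (h : ℕ) (Γ : Sequent) : Prop :=
  ∀ C ∈ Γ, ∀ B : Form, Form.OccursIn (Form.nut B) C → Form.lev (Form.nut B) < h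

/-- Every formula of the sequent has level `≤ k`. -/
def SeqLevLE (k : ℕ) (Γ : Sequent) : Prop := ∀ C ∈ Γ, C.lev ≤ k

/-- The infinitary cut-free system `K_ω`. -/
inductive KDer : Sequent → Prop
  | ax (Γ : Sequent) (i : ℕ) :
      KDer (insert (Form.atom i) (insert (Form.natom i) Γ))
  | orR (Γ : Sequent) (A B : Form) :
      KDer (insert A (insert B Γ)) → KDer (insert (Form.or A B) Γ)
  | andR (Γ : Sequent) (A B : Form) :
      KDer (insert A Γ) → KDer (insert B Γ) → KDer (insert (Form.and A B) Γ)
  | boxR (Γ S : Sequent) (A : Form) :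
      KDer (insert A Γ) → KDer (Γ.image Form.dia ∪ insert (Form.box A) S)
  | clo (Γ : Sequent) (A : Form) :
      KDer (insert (Form.subst A (Form.mu A)) Γ) → KDer (insert (Form.mu A) Γ)
  | nuR (Γ : Sequent) (A : Form) :
      (∀ i : ℕ, KDer (insert (Form.iter A i) Γ)) → KDer (insert (Form.nu A) Γ)

/-- The finitary system `M` (with induction rule and cut). -/
inductive MDer : Sequent → Prop
  | ax (Γ : Sequent) (i : ℕ) :
      MDer (insert (Form.atom i) (insert (Form.natom i) Γ))
  | axMu (Γ : Sequent) (A : Form) :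
      MDer (insert (Form.mu A) (insert (Form.compl (Form.mu A)) Γ))
  | orR (Γ : Sequent) (A B : Form) :
      MDer (insert A (insert B Γ)) → MDer (insert (Form.or A B) Γ)
  | andR (Γ : Sequent) (A B : Form) :
      MDer (insert A Γ) → MDer (insert B Γ) → MDer (insert (Form.and A B) Γ)
  | boxR (Γ S : Sequent) (A : Form) :
      MDer (insert A Γ) → MDer (Γ.image Form.dia ∪ insert (Form.box A) S)
  | clo (Γ : Sequent) (A : Form) :
      MDer (insert (Form.subst A (Form.mu A)) Γ) → MDer (insert (Form.mu A) Γ)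
  | ind (A B : Form) :
      MDer (insert (Form.compl (Form.subst A B)) {B}) →
      MDer (insert (Form.compl (Form.mu A)) {B})
  | cut (Γ : Sequent) (A : Form) :
      A.IsL0 → A.ClosedF →
      MDer (insert A Γ) → MDer (insert (Form.compl A) Γ) → MDer Γ

/-- The finitary system `M`, with the extra recording that every sequent occurring
in the proof (i.e. the conclusion of every subderivation) has level `≤ k`. -/
inductive MDerB (k : ℕ) : Sequent → Prop
  | ax (Γ : Sequent) (i : ℕ) :
      SeqLevLE k (insert (Form.atom i) (insert (Form.natom i) Γ)) →
      MDerB k (insert (Form.atom i) (insert (Form.natom i) Γ))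
  | axMu (Γ : Sequent) (A : Form) :
      SeqLevLE k (insert (Form.mu A) (insert (Form.compl (Form.mu A)) Γ)) →
      MDerB k (insert (Form.mu A) (insert (Form.compl (Form.mu A)) Γ))
  | orR (Γ : Sequent) (A B : Form) :
      SeqLevLE k (insert (Form.or A B) Γ) →
      MDerB k (insert A (insert B Γ)) → MDerB k (insert (Form.or A B) Γ)
  | andR (Γ : Sequent) (A B : Form) :
      SeqLevLE k (insert (Form.and A B) Γ) →
      MDerB k (insert A Γ) → MDerB k (insert B Γ) → MDerB k (insert (Form.and A B) Γ)
  | boxR (Γ S : Sequent) (A : Form) :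
      SeqLevLE k (Γ.image Form.dia ∪ insert (Form.box A) S) →
      MDerB k (insert A Γ) → MDerB k (Γ.image Form.dia ∪ insert (Form.box A) S)
  | clo (Γ : Sequent) (A : Form) :
      SeqLevLE k (insert (Form.mu A) Γ) →
      MDerB k (insert (Form.subst A (Form.mu A)) Γ) → MDerB k (insert (Form.mu A) Γ)
  | ind (A B : Form) :
      SeqLevLE k (insert (Form.compl (Form.mu A)) {B}) →
      MDerB k (insert (Form.compl (Form.subst A B)) {B}) →
      MDerB k (insert (Form.compl (Form.mu A)) {B})
  | cut (Γ : Sequent) (A : Form) :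
      A.IsL0 → A.ClosedF → SeqLevLE k Γ →
      MDerB k (insert A Γ) → MDerB k (insert (Form.compl A) Γ) → MDerB k Γ

/-- Derivations of the system `M^Ω_k`, relative to a predicate `prev` expressing
cut-free derivability in `M^Ω_{k-1}`.  The boolean index is `true` if instances
of cut are allowed and `false` for cut-free derivations. -/
inductive OmDerAux (prev : Sequent → Prop) (k : ℕ) : Bool → Sequent → Prop
  | ax (c : Bool) (Γ : Sequent) (i : ℕ) :
      OmDerAux prev k c (insert (Form.atom i) (insert (Form.natom i) Γ))
  | orR (c : Bool) (Γ : Sequent) (A B : Form) :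
      OmDerAux prev k c (insert A (insert B Γ)) →
      OmDerAux prev k c (insert (Form.or A B) Γ)
  | andR (c : Bool) (Γ : Sequent) (A B : Form) :
      OmDerAux prev k c (insert A Γ) → OmDerAux prev k c (insert B Γ) →
      OmDerAux prev k c (insert (Form.and A B) Γ)
  | boxR (c : Bool) (Γ S : Sequent) (A : Form) :
      OmDerAux prev k c (insert A Γ) →
      OmDerAux prev k c (Γ.image Form.dia ∪ insert (Form.box A) S)
  | clo (c : Bool) (Γ : Sequent) (A : Form) :
      OmDerAux prev k c (insert (Form.subst A (Form.mu A)) Γ) →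
      OmDerAux prev k c (insert (Form.mu A) Γ)
  | nuR (c : Bool) (Γ : Sequent) (A : Form) :
      (∀ i : ℕ, OmDerAux prev k c (insert (Form.iter A i) Γ)) →
      OmDerAux prev k c (insert (Form.nu A) Γ)
  | cut (Γ : Sequent) (A : Form) :
      A.IsL0 → A.ClosedF → A.lev ≤ k →
      OmDerAux prev k true (insert (Form.prime A) Γ) →
      OmDerAux prev k true (insert (Form.prime (Form.compl A)) Γ) →
      OmDerAux prev k true Γ
  | omega (c : Bool) (Γ : Sequent) (A : Form) (h : ℕ) :
      1 ≤ h → h ≤ k → A.IsL0 →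
      Form.lev (Form.prime (Form.compl (Form.mu A))) = h →
      (∀ Δ : Sequent, ClosedSeq Δ → Positive h Δ →
        prev (insert (Form.prime (Form.mu A)) Δ) → OmDerAux prev k c (Δ ∪ Γ)) →
      OmDerAux prev k c (insert (Form.prime (Form.compl (Form.mu A))) Γ)
  | omegaT (c : Bool) (Γ : Sequent) (A : Form) (h : ℕ) :
      1 ≤ h → h ≤ k → A.IsL0 →
      Form.lev (Form.prime (Form.compl (Form.mu A))) = h →
      OmDerAux prev k c (insert (Form.prime (Form.mu A)) Γ) →
      (∀ Δ : Sequent, ClosedSeq Δ → Positive h Δ →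
        prev (insert (Form.prime (Form.mu A)) Δ) → OmDerAux prev k c (Δ ∪ Γ)) →
      OmDerAux prev k c Γ

/-- `OmProv k c Γ`: the sequent `Γ` is derivable in `M^Ω_k`
(cut-free when `c = false`). -/
def OmProv : ℕ → Bool → Sequent → Prop
  | 0     => OmDerAux (fun _ => False) 0
  | k + 1 => OmDerAux (fun Δ => OmProv k false Δ) (k + 1)

namespace Form

theorem prime_subst (A B : Form) : prime (subst A B) = subst (prime A) (prime B) := by
  induction A <;> simp [subst, prime, *]

theorem compl_compl {A : Form} (hA : IsL0 A) : compl (compl A) = A := by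
  induction A <;> simp_all [compl, IsL0]

theorem closedF_subst (A : Form) {B : Form} (hB : ClosedF B) : ClosedF (subst A B) := by
  induction A <;> simp_all [subst, ClosedF]

theorem closedF_prime {A : Form} (hA : ClosedF A) : ClosedF (prime A) := by
  induction A <;> simp_all [prime, ClosedF]

theorem closedF_iter (A : Form) (i : ℕ) : ClosedF (iter A i) := by
  induction i with
  | zero => simp [iter, top, ClosedF]
  | succ i ih => exact closedF_subst A ih

theorem IsL0.subst {A B : Form} (hA : IsL0 A) (hB : IsL0 B) : IsL0 (subst A B) := by
  induction A <;> simp_all [Form.subst, IsL0]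

theorem IsL0.compl {A : Form} (hA : IsL0 A) : IsL0 (compl A) := by
  induction A <;> simp_all [Form.compl, IsL0]

theorem IsL0.iter {A : Form} (hA : IsL0 A) (i : ℕ) : IsL0 (iter A i) := by
  induction i with
  | zero => simp [Form.iter, top, IsL0]
  | succ i ih => exact hA.subst ih

@[simp] theorem lev_prime (A : Form) : lev (prime A) = lev A := by
  induction A <;> simp [prime, lev, *]

@[simp] theorem lev_compl (A : Form) : lev (compl A) = lev A := by
  induction A <;> simp [compl, lev, *]

theorem lev_subst_le (A B : Form) : lev (subst A B) ≤ max (lev A) (lev B) := by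
  induction A <;> simp [subst, lev, *] <;> omega

theorem lev_iter_le (A : Form) (i : ℕ) : lev (iter A i) ≤ lev A := by
  induction i with
  | zero => simp [iter, top, lev]
  | succ i ih => exact (lev_subst_le A _).trans (max_le le_rfl ih)

def unprime : Form → Form
  | atom i  => atom i
  | natom i => natom i
  | var     => var
  | and A B => and (unprime A) (unprime B)
  | or A B  => or (unprime A) (unprime B)
  | box A   => box (unprime A)
  | dia A   => dia (unprime A)
  | mu A    => mu (unprime A)
  | nu A    => nu (unprime A)
  | nut A   => nu (unprime A)

theorem unprime_prime {A : Form} (hA : IsL0 A) : unprime (prime A) = A := by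
  induction A <;> simp_all [prime, unprime, IsL0]

theorem prime_injOn : Set.InjOn prime {A | IsL0 A} := fun A hA B hB h => by
  rw [← unprime_prime hA, ← unprime_prime hB, h]

def IsPositive (h : ℕ) : Form → Prop
  | and A B => IsPositive h A ∧ IsPositive h B
  | or A B  => IsPositive h A ∧ IsPositive h B
  | box A   => IsPositive h A
  | dia A   => IsPositive h A
  | mu A    => IsPositive h A
  | nu A    => IsPositive h A
  | nut A   => lev (nut A) < h ∧ IsPositive h A
  | _       => True

theorem isPositive_iff_occursIn {h : ℕ} {A : Form} :
    IsPositive h A ↔ ∀ B, OccursIn (nut B) A → lev (nut B) < h := by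
  induction A <;> simp_all [IsPositive, OccursIn, or_imp, forall_and]

theorem IsPositive.subst {h : ℕ} {A B : Form} (hA : IsPositive h A) (hB : IsPositive h B) :
    IsPositive h (subst A B) := by
  induction A <;> simp_all [Form.subst, IsPositive]

theorem IsPositive.iter {h : ℕ} {A : Form} (hA : IsPositive h A) (i : ℕ) :
    IsPositive h (iter A i) := by
  induction i with
  | zero => simp [Form.iter, top, IsPositive]
  | succ i ih => exact hA.subst ih

theorem IsPositive.mono {h h' : ℕ} {A : Form} (hA : IsPositive h A) (hh : h ≤ h') :
    IsPositive h' A := by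
  induction A <;> grind [IsPositive]

theorem isPositive_of_lev_lt {h : ℕ} {A : Form} (hA : lev A < h) : IsPositive h A := by
  induction A <;> grind [IsPositive, lev]

theorem isPositive_prime_iter_compl {A : Form} (i : ℕ) :
    IsPositive (lev (mu A)) (prime (iter (compl A) i)) :=
  isPositive_of_lev_lt <| by simpa [lev, Nat.lt_succ_iff] using lev_iter_le (compl A) i

theorem isPositive_prime_mu {h : ℕ} {A : Form} (hA : lev (mu A) ≤ h) :
    IsPositive h (prime (mu A)) :=
  isPositive_of_lev_lt (A := prime A) ((lev_prime A).trans_lt hA)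

end Form

open Form Finset

theorem positive_iff {h : ℕ} {Γ : Sequent} : Positive h Γ ↔ ∀ C ∈ Γ, IsPositive h C := by
  simp only [Positive, isPositive_iff_occursIn]

theorem forall_closedF_isPositive {h n : ℕ} {Γ : Sequent} (hcl : ClosedSeq Γ)
    (hpos : Positive h Γ) (hh : h ≤ n) : ∀ C ∈ Γ, ClosedF C ∧ IsPositive n C :=
  fun C hC => ⟨hcl C hC, (positive_iff.mp hpos C hC).mono hh⟩

/-- `omPrev k` is the side condition of the Ω-rules of `M^Ω_k`: cut-free derivability in
`M^Ω_{k-1}` (nothing for `k = 0`). -/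
def omPrev : ℕ → Sequent → Prop
  | 0     => fun _ => False
  | k + 1 => OmProv k false

theorem omProv_eq (k : ℕ) : OmProv k = OmDerAux (omPrev k) k := by
  cases k <;> rfl

namespace OmDerAux

variable {prev : Sequent → Prop} {k : ℕ} {c : Bool}

theorem of_insert_of_mem {Γ : Sequent} {A : Form} (d : OmDerAux prev k c (insert A Γ))
    (hA : A ∈ Γ) : OmDerAux prev k c Γ :=
  insert_eq_of_mem hA ▸ d

theorem weaken {Γ Γ' : Sequent} (d : OmDerAux prev k c Γ) (hs : Γ ⊆ Γ') :
    OmDerAux prev k c Γ' := by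
  induction d generalizing Γ' with
  | ax c Γ i =>
    obtain ⟨ha, hn, -⟩ : _ ∧ _ ∧ Γ ⊆ Γ' := by simpa [insert_subset_iff] using hs
    exact ((ax c Γ' i).of_insert_of_mem (mem_insert_of_mem ha)).of_insert_of_mem hn
  | orR c Γ A B _ ih =>
    rw [insert_subset_iff] at hs
    exact (orR c Γ' A B (ih (insert_subset_insert _ (insert_subset_insert _ hs.2))))
      |>.of_insert_of_mem hs.1
  | andR c Γ A B _ _ ih₁ ih₂ =>
    rw [insert_subset_iff] at hs
    exact (andR c Γ' A B (ih₁ (insert_subset_insert _ hs.2))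
      (ih₂ (insert_subset_insert _ hs.2))).of_insert_of_mem hs.1
  | boxR c Γ S A d _ =>
    rw [union_subset_iff, insert_subset_iff] at hs
    have d' := boxR c Γ Γ' A d
    rwa [insert_eq_of_mem hs.2.1, union_eq_right.mpr hs.1] at d'
  | clo c Γ A _ ih =>
    rw [insert_subset_iff] at hs
    exact (clo c Γ' A (ih (insert_subset_insert _ hs.2))).of_insert_of_mem hs.1
  | nuR c Γ A _ ih =>
    rw [insert_subset_iff] at hs
    exact (nuR c Γ' A fun i => ih i (insert_subset_insert _ hs.2)).of_insert_of_mem hs.1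
  | cut Γ A hA hcl hlev _ _ ih₁ ih₂ =>
    exact cut Γ' A hA hcl hlev (ih₁ (insert_subset_insert _ hs))
      (ih₂ (insert_subset_insert _ hs))
  | omega c Γ A h h1 h2 hA hl _ ih =>
    rw [insert_subset_iff] at hs
    exact (omega c Γ' A h h1 h2 hA hl fun Δ hcl hpos hd =>
      ih Δ hcl hpos hd (union_subset_union le_rfl hs.2)).of_insert_of_mem hs.1
  | omegaT c Γ A h h1 h2 hA hl _ _ ih₁ ih₂ =>
    exact omegaT c Γ' A h h1 h2 hA hl (ih₁ (insert_subset_insert _ hs)) fun Δ hcl hpos hd =>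
      ih₂ Δ hcl hpos hd (union_subset_union le_rfl hs)

theorem pair_atom (i : ℕ) : OmDerAux prev k c {atom i, natom i} := by
  simpa using ax c ∅ i

theorem pair_and_or {A₁ A₂ B₁ B₂ : Form} (d₁ : OmDerAux prev k c {A₁, B₁})
    (d₂ : OmDerAux prev k c {A₂, B₂}) : OmDerAux prev k c {and A₁ A₂, or B₁ B₂} := by
  have hor : ∀ {A B : Form}, B = B₁ ∨ B = B₂ → OmDerAux prev k c {A, B} →
      OmDerAux prev k c {A, or B₁ B₂} := fun {A _} hB d =>
    pair_comm (or B₁ B₂) A ▸ orR c {A} B₁ B₂ (d.weaken fun x hx => by grind)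
  exact andR c _ A₁ A₂ (hor (.inl rfl) d₁) (hor (.inr rfl) d₂)

theorem pair_or_and {A₁ A₂ B₁ B₂ : Form} (d₁ : OmDerAux prev k c {A₁, B₁})
    (d₂ : OmDerAux prev k c {A₂, B₂}) : OmDerAux prev k c {or A₁ A₂, and B₁ B₂} :=
  pair_comm (and B₁ B₂) _ ▸
    pair_and_or (pair_comm A₁ B₁ ▸ d₁) (pair_comm A₂ B₂ ▸ d₂)

theorem pair_box_dia {A B : Form} (d : OmDerAux prev k c {A, B}) :
    OmDerAux prev k c {box A, dia B} := by
  have d' := boxR c {B} ∅ A d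
  rwa [image_singleton, insert_empty, singleton_union, pair_comm] at d'

theorem pair_dia_box {A B : Form} (d : OmDerAux prev k c {A, B}) :
    OmDerAux prev k c {dia A, box B} :=
  pair_comm (box B) _ ▸ pair_box_dia (pair_comm A B ▸ d)

section Identity

variable (hemb : ∀ Γ, prev Γ → OmDerAux prev k false Γ)
include hemb

theorem identity_mu {A : Form} (hA : IsL0 A) (hlev : lev (mu A) ≤ k) :
    OmDerAux prev k false {prime (mu A), prime (compl (mu A))} := by
  rw [pair_comm]
  refine omega false _ A _ (Nat.le_add_left 1 _) hlev hA (by simp [lev]) fun Δ _ _ hd => ?_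
  rw [union_singleton]
  exact hemb _ hd

theorem identity_subst {P Q : Form} (hPQ : OmDerAux prev k false {P, Q}) {C : Form}
    (hC : IsL0 C) (hlev : lev C ≤ k) :
    OmDerAux prev k false {subst (prime C) P, subst (prime (compl C)) Q} := by
  induction C with
  | atom i => exact pair_atom i
  | natom i => exact pair_comm (atom i) _ ▸ pair_atom i
  | var => exact hPQ
  | and C₁ C₂ ih₁ ih₂ =>
    exact pair_and_or (ih₁ hC.1 (le_of_max_le_left hlev)) (ih₂ hC.2 (le_of_max_le_right hlev))
  | or C₁ C₂ ih₁ ih₂ =>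
    exact pair_or_and (ih₁ hC.1 (le_of_max_le_left hlev)) (ih₂ hC.2 (le_of_max_le_right hlev))
  | box C ih => exact pair_box_dia (ih hC hlev)
  | dia C ih => exact pair_dia_box (ih hC hlev)
  | mu C => exact identity_mu hemb hC hlev
  | nu C =>
    have hC : IsL0 C := hC
    have d := identity_mu hemb hC.compl (by simpa [lev] using hlev)
    rw [pair_comm] at d
    simpa only [prime, Form.compl, Form.subst, compl_compl hC] using d
  | nut C => exact hC.elim

theorem identity_iter {C : Form} (hC : IsL0 C) (hlev : lev C ≤ k) (i : ℕ) :
    OmDerAux prev k false {prime (mu C), prime (iter (compl C) i)} := by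
  induction i with
  | zero => exact pair_comm (iter (compl C) 0).prime _ ▸ orR false _ _ _ (ax false _ 0)
  | succ i ih =>
    rw [iter, prime_subst]
    exact clo false _ _ (identity_subst hemb ih hC hlev)

end Identity

end OmDerAux

namespace Form

def CoveredBy (x G : Form) : Prop := x = G ∨ (IsL0 G ∧ x = prime G)

namespace CoveredBy

variable {x G : Form}

theorem refl (x : Form) : CoveredBy x x := .inl rfl

theorem prime (hG : IsL0 G) : CoveredBy (Form.prime G) G := .inr ⟨hG, rfl⟩

theorem atom_eq {i : ℕ} (h : CoveredBy (atom i) G) : G = atom i := by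
  rcases h with rfl | ⟨-, h⟩
  · rfl
  · cases G <;> simp_all [Form.prime]

theorem natom_eq {i : ℕ} (h : CoveredBy (natom i) G) : G = natom i := by
  rcases h with rfl | ⟨-, h⟩
  · rfl
  · cases G <;> simp_all [Form.prime]

theorem nu_eq {A : Form} (h : CoveredBy (nu A) G) : G = nu A := by
  cases G <;> simp_all [CoveredBy, Form.prime]

theorem exists_and {A B : Form} (h : CoveredBy (and A B) G) :
    ∃ G₁ G₂, G = and G₁ G₂ ∧ CoveredBy A G₁ ∧ CoveredBy B G₂ := by
  rcases h with rfl | ⟨hG, h⟩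
  · exact ⟨A, B, rfl, refl A, refl B⟩
  · cases G <;> simp_all [CoveredBy, Form.prime, IsL0]

theorem exists_or {A B : Form} (h : CoveredBy (or A B) G) :
    ∃ G₁ G₂, G = or G₁ G₂ ∧ CoveredBy A G₁ ∧ CoveredBy B G₂ := by
  rcases h with rfl | ⟨hG, h⟩
  · exact ⟨A, B, rfl, refl A, refl B⟩
  · cases G <;> simp_all [CoveredBy, Form.prime, IsL0]

theorem exists_box {A : Form} (h : CoveredBy (box A) G) :
    ∃ G₁, G = box G₁ ∧ CoveredBy A G₁ := by
  cases G <;> simp_all [CoveredBy, Form.prime, IsL0]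

theorem exists_dia {A : Form} (h : CoveredBy (dia A) G) :
    ∃ G₁, G = dia G₁ ∧ CoveredBy A G₁ := by
  cases G <;> simp_all [CoveredBy, Form.prime, IsL0]

theorem exists_mu {A : Form} (h : CoveredBy (mu A) G) :
    ∃ G₁, G = mu G₁ ∧ CoveredBy (subst A (mu A)) (subst G₁ (mu G₁)) := by
  rcases h with rfl | ⟨hG, h⟩
  · exact ⟨A, rfl, refl _⟩
  · cases G <;> simp only [Form.prime, reduceCtorEq, mu.injEq] at h
    case mu G₁ =>
      subst h
      exact ⟨G₁, rfl, .inr ⟨IsL0.subst hG hG, (prime_subst G₁ (mu G₁)).symm⟩⟩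

theorem eq_or_eq_of_prime {B : Form} (h : CoveredBy (Form.prime B) G) (hB : IsL0 B) :
    G = Form.prime B ∨ G = B :=
  h.imp Eq.symm fun ⟨hG, h⟩ => prime_injOn hG hB h.symm

end CoveredBy

end Form

def SeqCoveredBy (X T : Sequent) : Prop := ∀ x ∈ X, ∃ G ∈ T, CoveredBy x G

namespace SeqCoveredBy

variable {X X' T T' : Sequent}

theorem refl (X : Sequent) : SeqCoveredBy X X := fun x hx => ⟨x, hx, .refl x⟩

theorem insert {x G : Form} (hx : CoveredBy x G) (h : SeqCoveredBy X T) :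
    SeqCoveredBy (insert x X) (insert G T) := by
  intro y hy
  rcases mem_insert.mp hy with rfl | hy
  · exact ⟨G, mem_insert_self _ _, hx⟩
  · obtain ⟨G', hG', h'⟩ := h y hy
    exact ⟨G', mem_insert_of_mem hG', h'⟩

theorem union (h : SeqCoveredBy X T) (h' : SeqCoveredBy X' T') :
    SeqCoveredBy (X ∪ X') (T ∪ T') := by
  intro y hy
  rcases mem_union.mp hy with hy | hy
  · obtain ⟨G, hG, hc⟩ := h y hy
    exact ⟨G, mem_union_left _ hG, hc⟩
  · obtain ⟨G, hG, hc⟩ := h' y hy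
    exact ⟨G, mem_union_right _ hG, hc⟩

theorem of_insert {x : Form} (h : SeqCoveredBy (Insert.insert x X) T) : SeqCoveredBy X T :=
  fun y hy => h y (mem_insert_of_mem hy)

theorem exists_image_dia {Γ S : Sequent} (h : SeqCoveredBy (Γ.image dia ∪ S) T) :
    ∃ Γ', SeqCoveredBy Γ Γ' ∧ Γ'.image dia ⊆ T := by
  refine ⟨T.preimage dia (Function.Injective.injOn fun _ _ => dia.inj), fun y hy => ?_,
    fun x hx => ?_⟩
  · obtain ⟨G, hG, hcov⟩ := h _ (mem_union_left _ (mem_image_of_mem dia hy))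
    obtain ⟨G', rfl, h'⟩ := hcov.exists_dia
    exact ⟨G', mem_preimage.mpr hG, h'⟩
  · obtain ⟨y, hy, rfl⟩ := mem_image.mp hx
    exact mem_preimage.mp hy

end SeqCoveredBy

namespace OmDerAux

variable {prev prev' : Sequent → Prop}

theorem transfer {m : ℕ}
    (hdown : ∀ C Δ, IsL0 C → lev (mu C) ≤ m → ClosedSeq Δ → Positive (lev (mu C)) Δ →
      prev' (insert (prime (mu C)) Δ) → prev (insert (prime (mu C)) Δ))
    (hiter : ∀ C i, IsL0 C → lev (mu C) ≤ m → prev {prime (mu C), prime (iter (compl C) i)})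
    {c : Bool} {X : Sequent} (d : OmDerAux prev m c X) (hc : c = false) {T : Sequent}
    (cov : SeqCoveredBy X T) : OmDerAux prev' (m + 1) false T := by
  induction d generalizing T with
  | ax c Γ i =>
    obtain ⟨G, hG, hcov⟩ := cov _ (mem_insert_self _ _)
    obtain ⟨G', hG', hcov'⟩ := cov _ (mem_insert_of_mem (mem_insert_self _ _))
    rw [hcov.atom_eq] at hG
    rw [hcov'.natom_eq] at hG'
    exact ((ax false T i).of_insert_of_mem (mem_insert_of_mem hG)).of_insert_of_mem hG'
  | orR c Γ A B _ ih =>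
    obtain ⟨G, hG, hcov⟩ := cov _ (mem_insert_self _ _)
    obtain ⟨G₁, G₂, rfl, h₁, h₂⟩ := hcov.exists_or
    exact (orR false T G₁ G₂ (ih hc ((cov.of_insert.insert h₂).insert h₁)))
      |>.of_insert_of_mem hG
  | andR c Γ A B _ _ ih₁ ih₂ =>
    obtain ⟨G, hG, hcov⟩ := cov _ (mem_insert_self _ _)
    obtain ⟨G₁, G₂, rfl, h₁, h₂⟩ := hcov.exists_and
    exact (andR false T G₁ G₂ (ih₁ hc (cov.of_insert.insert h₁))
      (ih₂ hc (cov.of_insert.insert h₂))).of_insert_of_mem hG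
  | boxR c Γ S A _ ih =>
    obtain ⟨G, hG, hcov⟩ := cov _ (mem_union_right _ (mem_insert_self _ _))
    obtain ⟨G₁, rfl, h₁⟩ := hcov.exists_box
    obtain ⟨Γ', hΓ, hsub⟩ := cov.exists_image_dia
    have d := boxR false Γ' T G₁ (ih hc (hΓ.insert h₁))
    rwa [insert_eq_of_mem hG, union_eq_right.mpr hsub] at d
  | clo c Γ A _ ih =>
    obtain ⟨G, hG, hcov⟩ := cov _ (mem_insert_self _ _)
    obtain ⟨G₁, rfl, h₁⟩ := hcov.exists_mu
    exact (clo false T G₁ (ih hc (cov.of_insert.insert h₁))).of_insert_of_mem hG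
  | nuR c Γ A _ ih =>
    obtain ⟨G, hG, hcov⟩ := cov _ (mem_insert_self _ _)
    rw [hcov.nu_eq] at hG
    exact (nuR false T A fun i => ih i hc (cov.of_insert.insert (.refl _))).of_insert_of_mem hG
  | cut => cases hc
  | omega c Γ A h h1 h2 hA hl _ ih =>
    obtain rfl : h = lev (mu A) := by rw [← hl]; simp
    obtain ⟨G, hG, hcov⟩ := cov _ (mem_insert_self _ _)
    rcases hcov.eq_or_eq_of_prime (show IsL0 (mu A) from hA).compl with rfl | rfl
    · refine (omega false T A _ h1 (h2.trans m.le_succ) hA hl fun Δ hcl hpos hd => ?_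
        ).of_insert_of_mem hG
      exact ih Δ hcl hpos (hdown A Δ hA h2 hcl hpos hd) hc
        ((SeqCoveredBy.refl Δ).union cov.of_insert)
    · refine (nuR false T (compl A) fun i => ?_).of_insert_of_mem hG
      have hcl : ClosedSeq {prime (iter (compl A) i)} := by
        simpa [ClosedSeq] using closedF_prime (closedF_iter (compl A) i)
      have hpos : Positive (lev (mu A)) {prime (iter (compl A) i)} := by
        simpa [positive_iff] using isPositive_prime_iter_compl i
      refine ih _ hcl hpos (hiter A i hA h2) hc ?_
      rw [singleton_union]
      exact cov.of_insert.insert (.prime (hA.compl.iter i))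
  | omegaT c Γ A h h1 h2 hA hl _ _ ih₁ ih₂ =>
    obtain rfl : h = lev (mu A) := by rw [← hl]; simp
    exact omegaT false T A _ h1 (h2.trans m.le_succ) hA hl (ih₁ hc (cov.insert (.refl _)))
      fun Δ hcl hpos hd =>
        ih₂ Δ hcl hpos (hdown A Δ hA h2 hcl hpos hd) hc ((SeqCoveredBy.refl Δ).union cov)

theorem lower {n : ℕ} (hemb : ∀ Γ, prev Γ → OmDerAux prev n false Γ) {c : Bool}
    {X : Sequent} (d : OmDerAux (OmDerAux prev n false) (n + 1) c X) (hc : c = false)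
    (hX : ∀ C ∈ X, ClosedF C ∧ IsPositive (n + 1) C) : OmDerAux prev n false X := by
  induction d with
  | ax c Γ i => exact ax false Γ i
  | orR c Γ A B _ ih =>
    simp only [forall_mem_insert, ClosedF, IsPositive] at hX
    exact orR false Γ A B (ih hc (by simp only [forall_mem_insert]; tauto))
  | andR c Γ A B _ _ ih₁ ih₂ =>
    simp only [forall_mem_insert, ClosedF, IsPositive] at hX
    exact andR false Γ A B (ih₁ hc (by simp only [forall_mem_insert]; tauto))
      (ih₂ hc (by simp only [forall_mem_insert]; tauto))
  | boxR c Γ S A _ ih =>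
    simp only [forall_mem_union, forall_mem_image, forall_mem_insert, ClosedF, IsPositive] at hX
    exact boxR false Γ S A (ih hc (forall_mem_insert _ _ _ |>.mpr ⟨hX.2.1, hX.1⟩))
  | clo c Γ A _ ih =>
    rw [forall_mem_insert] at hX
    exact clo false Γ A (ih hc (forall_mem_insert _ _ _ |>.mpr
      ⟨⟨closedF_subst A trivial, IsPositive.subst (A := A) hX.1.2 hX.1.2⟩, hX.2⟩))
  | nuR c Γ A _ ih =>
    rw [forall_mem_insert] at hX
    exact nuR false Γ A fun i => ih i hc (forall_mem_insert _ _ _ |>.mpr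
      ⟨⟨closedF_iter A i, IsPositive.iter (A := A) hX.1.2 i⟩, hX.2⟩)
  | cut => cases hc
  | omega c Γ A h h1 _ hA hl _ ih =>
    rw [forall_mem_insert] at hX
    have hh : h ≤ n := by
      have := hX.1.2.1
      rw [show nut (prime (compl A)) = prime (compl (mu A)) from rfl, hl] at this
      omega
    exact omega false Γ A h h1 hh hA hl fun Δ hcl hpos hd => ih Δ hcl hpos (hemb _ hd) hc
      (forall_mem_union.mpr ⟨forall_closedF_isPositive hcl hpos (by omega), hX.2⟩)
  | omegaT c Γ A h h1 h2 hA hl _ _ ih₁ ih₂ =>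
    obtain rfl : h = lev (mu A) := by rw [← hl]; simp
    have d₁ := ih₁ hc (forall_mem_insert _ _ _ |>.mpr
      ⟨⟨trivial, isPositive_prime_mu h2⟩, hX⟩)
    by_cases hh : lev (mu A) ≤ n
    · exact omegaT false Γ A _ h1 hh hA hl d₁ fun Δ hcl hpos hd =>
        ih₂ Δ hcl hpos (hemb _ hd) hc
          (forall_mem_union.mpr ⟨forall_closedF_isPositive hcl hpos (by omega), hX⟩)
    · -- an `Ω̃_{n+1}`-inference: its second premise, taken at `Δ = Γ`, applies to its first
      have hpos : Positive (lev (mu A)) Γ :=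
        positive_iff.mpr fun C hC => (hX C hC).2.mono (by omega)
      have d := ih₂ Γ (fun C hC => (hX C hC).1) hpos d₁ hc (forall_mem_union.mpr ⟨hX, hX⟩)
      rwa [union_self] at d

end OmDerAux

theorem omProv_embed_and_transfer (m : ℕ) :
    (∀ Γ, omPrev m Γ → OmProv m false Γ) ∧
      ∀ {X T : Sequent}, OmProv m false X → SeqCoveredBy X T → OmProv (m + 1) false T := by
  induction m with
  | zero =>
    refine ⟨fun _ h => h.elim, fun d cov => ?_⟩
    rw [omProv_eq] at d ⊢
    exact OmDerAux.transfer (fun _ _ _ h => absurd h (by simp [lev]))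
      (fun _ _ _ h => absurd h (by simp [lev])) d rfl cov
  | succ m ih =>
    have hemb : ∀ Γ, omPrev m Γ → OmDerAux (omPrev m) m false Γ := omProv_eq m ▸ ih.1
    refine ⟨fun Γ d => ih.2 d (.refl Γ), fun d cov => ?_⟩
    rw [omProv_eq] at d ⊢
    refine OmDerAux.transfer (fun C Δ _ hlev hcl hpos hd => ?_) (fun C i hC hlev => ?_) d rfl cov
    · change OmDerAux (OmProv m false) (m + 1) false _ at hd
      change OmProv m false _
      rw [omProv_eq] at hd ⊢
      exact OmDerAux.lower hemb hd rfl (forall_mem_insert _ _ _ |>.mpr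
        ⟨⟨trivial, isPositive_prime_mu hlev⟩, forall_closedF_isPositive hcl hpos hlev⟩)
    · change OmProv m false _
      rw [omProv_eq]
      exact OmDerAux.identity_iter hemb hC (Nat.le_of_succ_le_succ hlev) i

/-- for `h ≤ k`, if `μX.A` is a formula of `L0` with `lev(μX.A) = h`,
then `μX.A, (¬μX.A)ʹ` has a cut-free derivation in `M^Ω_k`. -/
theorem stmt3 (h k : ℕ) (hhk : h ≤ k) (A : Form)
    (hA : Form.IsL0 (Form.mu A)) (hlev : Form.lev (Form.mu A) = h) :
    OmProv k false {Form.mu A, Form.prime (Form.compl (Form.mu A))} := by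
  have hh : 1 ≤ h := hlev ▸ Nat.le_add_left 1 (lev A)
  obtain ⟨k, rfl⟩ : ∃ k', k = k' + 1 := ⟨k - 1, by omega⟩
  change OmDerAux (OmProv k false) (k + 1) false _
  rw [pair_comm]
  refine .omega false {mu A} A h hh hhk hA (by rw [← hlev]; simp) fun Δ _ _ hd => ?_
  rw [union_singleton]
  exact (omProv_embed_and_transfer k).2 hd ((SeqCoveredBy.refl Δ).insert (.prime hA))

end OneVarMu
end

section
/- Let A be an operator form of L0 with lev(νX.A) ≤ k, and let B be a formula of L0 with lev(B) ≤ k. If both sequents (¬A(B))', B and (¬A(B))', B' are derivable in M^Ω_k, then both sequents (¬μX.A)', B and (¬μX.A)', B' are derivable in M^Ω_k. -/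
/-!
Apply `Ω_h` with `h = lev(νX.A)`. Given an `h`-positive `Δ` and a cut-free `M^Ω_{k-1}`
derivation of `Δ, (μX.A)'`, replace throughout it the occurrences of `(μX.A)'` that lie outside
all fixed-point operators by `B` (resp. `B'`). Every rule survives the replacement; a closure
step unfolding a replaced `(μX.A)'` now has the premise `(A(B))', Θ`, which is cut on `A(B)`
against the hypothesis `(¬A(B))', B` (resp. `B'`). The result is a derivation of `Δ, B`
(resp. `Δ, B'`) in `M^Ω_k`.

Moving from level `k-1` to `k` changes the provisos of the `Ω`-rules, so they have to be
translated: a cut-free derivation of an `h`-positive sequent at level `j+1` collapses to level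
`j`, since its `Ω̃_{j+1}`-rules can be discharged by instantiating their proviso with the
conclusion itself. Collapsing and embedding one level into the next are proved together by
induction on the level.
-/

namespace OneVarMu

namespace Form

@[simp] lemma lev_compl_s7 (E : Form) : E.compl.lev = E.lev := by
  induction E <;> simp [compl, lev, *]

@[simp] lemma lev_prime_s7 (E : Form) : E.prime.lev = E.lev := by
  induction E <;> simp [prime, lev, *]

lemma prime_subst_s7 (E D : Form) : (E.subst D).prime = E.prime.subst D.prime := by
  induction E <;> simp [subst, prime, *]

lemma closedF_subst_s7 (E : Form) {D : Form} (hD : D.ClosedF) : (E.subst D).ClosedF := by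
  induction E <;> simp_all [subst, ClosedF]

lemma isL0_subst {E D : Form} (hE : E.IsL0) (hD : D.IsL0) : (E.subst D).IsL0 := by
  induction E <;> simp_all [subst, IsL0]

lemma lev_subst_le_s7 (E D : Form) : (E.subst D).lev ≤ max E.lev D.lev := by
  induction E <;> simp only [subst, lev] <;> omega

lemma lev_le_of_occursIn {E G : Form} (h : OccursIn E G) : E.lev ≤ G.lev := by
  induction G with
  | atom | natom | var => simp only [OccursIn] at h; simp [h]
  | and C D ihC ihD | or C D ihC ihD =>
    rcases h with rfl | h | h
    · rfl
    · exact (ihC h).trans (le_max_left ..)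
    · exact (ihD h).trans (le_max_right ..)
  | box C ih | dia C ih => rcases h with rfl | h; exacts [le_rfl, ih h]
  | mu C ih | nu C ih | nut C ih =>
    rcases h with rfl | h; exacts [le_rfl, (ih h).trans C.lev.le_succ]

lemma occursIn_subst {E D G : Form} (h : OccursIn (nut G) (E.subst D)) :
    OccursIn (nut G) E ∨ OccursIn (nut G) D := by
  induction E <;> simp_all [subst, OccursIn] <;> tauto

lemma closedF_iter_s7 (E : Form) (n : ℕ) : (iter E n).ClosedF := by
  induction n with
  | zero => exact ⟨trivial, trivial⟩
  | succ n ih => exact closedF_subst_s7 E ih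

lemma occursIn_of_occursIn_iter {E G : Form} {n : ℕ} (h : OccursIn (nut G) (iter E n)) :
    OccursIn (nut G) E := by
  induction n with
  | zero => simp [iter, top, OccursIn] at h
  | succ n ih => exact (occursIn_subst h).elim id ih

lemma lev_prime_compl_mu (C : Form) : (mu C).compl.prime.lev = C.lev + 1 := by
  simp [compl, prime, lev]

def ClosedPositive (h : ℕ) (C : Form) : Prop :=
  C.ClosedF ∧ ∀ B : Form, OccursIn (nut B) C → (nut B).lev < h

end Form

lemma forall_closedPositive_iff {h : ℕ} {Γ : Sequent} :
    (∀ C ∈ Γ, C.ClosedPositive h) ↔ ClosedSeq Γ ∧ Positive h Γ :=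
  forall₂_and

namespace Form.ClosedPositive

variable {h : ℕ} {A B : Form}

lemma mono {h' : ℕ} (hA : A.ClosedPositive h) (hh : h ≤ h') : A.ClosedPositive h' :=
  ⟨hA.1, fun E hE => (hA.2 E hE).trans_le hh⟩

lemma of_occursIn {C D : Form} (hC : C.ClosedF) (hD : D.ClosedPositive h)
    (hCD : ∀ E, OccursIn (nut E) C → OccursIn (nut E) D) : C.ClosedPositive h :=
  ⟨hC, fun E hE => hD.2 E (hCD E hE)⟩

lemma of_or (hAB : (or A B).ClosedPositive h) : A.ClosedPositive h ∧ B.ClosedPositive h :=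
  ⟨of_occursIn hAB.1.1 hAB fun _ => .inr ∘ .inl,
    of_occursIn hAB.1.2 hAB fun _ => .inr ∘ .inr⟩

lemma of_and (hAB : (and A B).ClosedPositive h) : A.ClosedPositive h ∧ B.ClosedPositive h :=
  ⟨of_occursIn hAB.1.1 hAB fun _ => .inr ∘ .inl,
    of_occursIn hAB.1.2 hAB fun _ => .inr ∘ .inr⟩

lemma of_box (hA : (box A).ClosedPositive h) : A.ClosedPositive h :=
  of_occursIn hA.1 hA fun _ => .inr

lemma of_dia (hA : (dia A).ClosedPositive h) : A.ClosedPositive h :=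
  of_occursIn hA.1 hA fun _ => .inr

lemma subst_mu (hA : (mu A).ClosedPositive h) : (A.subst (mu A)).ClosedPositive h :=
  of_occursIn (closedF_subst_s7 A trivial) hA fun _ hE => (occursIn_subst hE).elim .inr id

lemma iter (hA : (nu A).ClosedPositive h) (n : ℕ) : (A.iter n).ClosedPositive h :=
  of_occursIn (closedF_iter_s7 A n) hA fun _ hE => .inr (occursIn_of_occursIn_iter hE)

lemma prime_mu (hA : A.lev < h) : (mu A).prime.ClosedPositive h := by
  refine ⟨trivial, fun E hE => ?_⟩
  rcases hE with hE | hE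
  · cases hE
  · exact (lev_le_of_occursIn hE).trans_lt (by simpa using hA)

end Form.ClosedPositive

def prevOf : ℕ → Sequent → Prop
  | 0 => fun _ => False
  | j + 1 => OmProv j false

lemma omProv_eq_s7 (j : ℕ) : OmProv j = OmDerAux (prevOf j) j := by
  cases j <;> rfl

lemma prevOf_succ (j : ℕ) : prevOf (j + 1) = OmDerAux (prevOf j) j false :=
  congrFun (omProv_eq_s7 j) false

/-- `p'` implies `p` on every sequent `(μX.C)', Δ` occurring in the proviso of an
`Ω_h`-rule with `h ≤ k`. -/
def ProvisoLE (k : ℕ) (p' p : Sequent → Prop) : Prop :=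
  ∀ (C : Form) (Δ : Sequent), C.lev + 1 ≤ k → ClosedSeq Δ → Positive (C.lev + 1) Δ →
    p' (insert (Form.mu C).prime Δ) → p (insert (Form.mu C).prime Δ)

namespace OmDerAux

variable {p p' : Sequent → Prop} {k k' : ℕ} {c : Bool}

lemma union_right {Γ : Sequent} (hΓ : OmDerAux p k c Γ) (Θ : Sequent) :
    OmDerAux p k c (Γ ∪ Θ) := by
  induction hΓ with
  | ax c Γ i => simpa only [Finset.insert_union] using ax c (Γ ∪ Θ) i
  | orR c Γ A B _ ih =>
    simp only [Finset.insert_union] at ih ⊢; exact orR c _ A B ih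
  | andR c Γ A B _ _ ih₁ ih₂ =>
    simp only [Finset.insert_union] at ih₁ ih₂ ⊢; exact andR c _ A B ih₁ ih₂
  | boxR c Γ S A hA _ =>
    simpa only [Finset.union_assoc, Finset.insert_union] using boxR c Γ (S ∪ Θ) A hA
  | clo c Γ A _ ih =>
    simp only [Finset.insert_union] at ih ⊢; exact clo c _ A ih
  | nuR c Γ A _ ih =>
    simp only [Finset.insert_union] at ih ⊢; exact nuR c _ A ih
  | cut Γ A h₁ h₂ h₃ _ _ ih₁ ih₂ =>
    simp only [Finset.insert_union] at ih₁ ih₂; exact cut _ A h₁ h₂ h₃ ih₁ ih₂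
  | omega c Γ A h h₁ h₂ h₃ h₄ _ ih =>
    rw [Finset.insert_union]
    exact omega c _ A h h₁ h₂ h₃ h₄ fun Δ hc hp hΔ =>
      Finset.union_assoc Δ Γ Θ ▸ ih Δ hc hp hΔ
  | omegaT c Γ A h h₁ h₂ h₃ h₄ _ _ ih₀ ih =>
    simp only [Finset.insert_union] at ih₀
    exact omegaT c _ A h h₁ h₂ h₃ h₄ ih₀ fun Δ hc hp hΔ =>
      Finset.union_assoc Δ Γ Θ ▸ ih Δ hc hp hΔ

lemma mono {Γ Γ' : Sequent} (hΓ : OmDerAux p k c Γ) (hs : Γ ⊆ Γ') : OmDerAux p k c Γ' :=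
  Finset.union_eq_right.mpr hs ▸ hΓ.union_right Γ'

lemma of_insert_of_mem_s7 {Γ : Sequent} {P : Form} (h : OmDerAux p k c (insert P Γ))
    (hP : P ∈ Γ) : OmDerAux p k c Γ :=
  Finset.insert_eq_of_mem hP ▸ h

lemma cut_of_mem {Γ : Sequent} {C T : Form} (hC : C.IsL0) (hCc : C.ClosedF) (hlev : C.lev ≤ k)
    (h : OmDerAux p k true (insert C.prime Γ)) (hT : OmDerAux p k true {C.compl.prime, T})
    (hTΓ : T ∈ Γ) : OmDerAux p k true Γ :=
  cut Γ C hC hCc hlev h <|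
    hT.mono (Finset.insert_subset_insert _ (Finset.singleton_subset_iff.2 hTΓ))


lemma lift {Γ : Sequent} (hk : k ≤ k') (hp : ProvisoLE k p' p) (hΓ : OmDerAux p k c Γ) :
    OmDerAux p' k' c Γ := by
  induction hΓ with
  | ax c Γ i => exact ax c Γ i
  | orR c Γ A B _ ih => exact orR c Γ A B ih
  | andR c Γ A B _ _ ih₁ ih₂ => exact andR c Γ A B ih₁ ih₂
  | boxR c Γ S A _ ih => exact boxR c Γ S A ih
  | clo c Γ A _ ih => exact clo c Γ A ih
  | nuR c Γ A _ ih => exact nuR c Γ A ih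
  | cut Γ A h₁ h₂ h₃ _ _ ih₁ ih₂ => exact cut Γ A h₁ h₂ (h₃.trans hk) ih₁ ih₂
  | omega c Γ A h h₁ h₂ h₃ h₄ _ ih =>
    obtain rfl : A.lev + 1 = h := (Form.lev_prime_compl_mu A).symm.trans h₄
    exact omega c Γ A _ h₁ (h₂.trans hk) h₃ h₄ fun Δ hc hpos hΔ =>
      ih Δ hc hpos (hp A Δ h₂ hc hpos hΔ)
  | omegaT c Γ A h h₁ h₂ h₃ h₄ _ _ ih₀ ih =>
    obtain rfl : A.lev + 1 = h := (Form.lev_prime_compl_mu A).symm.trans h₄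
    exact omegaT c Γ A _ h₁ (h₂.trans hk) h₃ h₄ ih₀ fun Δ hc hpos hΔ =>
      ih Δ hc hpos (hp A Δ h₂ hc hpos hΔ)

lemma collapse {j : ℕ} (hemb : ∀ Γ, prevOf j Γ → prevOf (j + 1) Γ) {Γ : Sequent}
    (hΓ : OmDerAux (prevOf (j + 1)) (j + 1) c Γ) (hc : c = false)
    (hpos : ∀ C ∈ Γ, C.ClosedPositive (j + 1)) : OmDerAux (prevOf j) j false Γ := by
  induction hΓ with
  | ax _ Γ i => exact ax false Γ i
  | orR _ Γ A B _ ih =>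
    simp only [Finset.forall_mem_insert] at hpos ih
    exact orR false Γ A B (ih hc ⟨hpos.1.of_or.1, hpos.1.of_or.2, hpos.2⟩)
  | andR _ Γ A B _ _ ih₁ ih₂ =>
    simp only [Finset.forall_mem_insert] at hpos ih₁ ih₂
    exact andR false Γ A B (ih₁ hc ⟨hpos.1.of_and.1, hpos.2⟩)
      (ih₂ hc ⟨hpos.1.of_and.2, hpos.2⟩)
  | boxR _ Γ S A _ ih =>
    simp only [Finset.forall_mem_union, Finset.forall_mem_image, Finset.forall_mem_insert]
      at hpos ih
    exact boxR false Γ S A (ih hc ⟨hpos.2.1.of_box, fun C hC => (hpos.1 hC).of_dia⟩)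
  | clo _ Γ A _ ih =>
    simp only [Finset.forall_mem_insert] at hpos ih
    exact clo false Γ A (ih hc ⟨hpos.1.subst_mu, hpos.2⟩)
  | nuR _ Γ A _ ih =>
    simp only [Finset.forall_mem_insert] at hpos ih
    exact nuR false Γ A fun n => ih n hc ⟨hpos.1.iter n, hpos.2⟩
  | cut => cases hc
  | omega _ Γ A h h₁ h₂ h₃ h₄ _ ih =>
    simp only [Finset.forall_mem_insert] at hpos
    have hh : h < j + 1 := h₄ ▸ hpos.1.2 _ (.inl rfl)
    refine omega false Γ A h h₁ (by omega) h₃ h₄ fun Δ hcΔ hpΔ hΔ =>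
      ih Δ hcΔ hpΔ (hemb _ hΔ) hc ?_
    exact Finset.forall_mem_union.2
      ⟨fun C hC => (forall_closedPositive_iff.2 ⟨hcΔ, hpΔ⟩ C hC).mono hh.le, hpos.2⟩
  | omegaT _ Γ A h h₁ h₂ h₃ h₄ _ _ ih₀ ih =>
    obtain rfl : A.lev + 1 = h := (Form.lev_prime_compl_mu A).symm.trans h₄
    have hΓA := ih₀ hc (Finset.forall_mem_insert .. |>.2 ⟨.prime_mu h₂, hpos⟩)
    have hΔΓ {Δ : Sequent} (hcΔ : ClosedSeq Δ) (hpΔ : Positive (A.lev + 1) Δ) :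
        ∀ C ∈ Δ ∪ Γ, C.ClosedPositive (j + 1) :=
      Finset.forall_mem_union.2
        ⟨fun C hC => (forall_closedPositive_iff.2 ⟨hcΔ, hpΔ⟩ C hC).mono h₂, hpos⟩
    rcases h₂.lt_or_eq with hlt | heq
    · exact omegaT false Γ A _ h₁ (by omega) h₃ h₄ hΓA fun Δ hcΔ hpΔ hΔ =>
        ih Δ hcΔ hpΔ (hemb _ hΔ) hc (hΔΓ hcΔ hpΔ)
    · -- the proviso, instantiated with `Δ := Γ`, eliminates the `Ω̃`-rule
      have hΓ := forall_closedPositive_iff.1 hpos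
      rw [← heq] at hΓ
      have := ih Γ hΓ.1 hΓ.2 (by rwa [prevOf_succ]) hc (hΔΓ hΓ.1 hΓ.2)
      rwa [Finset.union_self] at this

end OmDerAux

lemma provisoLE_zero (p' p : Sequent → Prop) : ProvisoLE 0 p' p :=
  fun _ _ hC => absurd hC (Nat.succ_ne_zero _ ∘ Nat.le_zero.1)

lemma provisoLE_prevOf_succ {j : ℕ} (hemb : ∀ Γ, prevOf j Γ → prevOf (j + 1) Γ) :
    ProvisoLE (j + 1) (prevOf (j + 2)) (prevOf (j + 1)) := by
  intro C Δ hC hcΔ hpΔ hΔ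
  rw [prevOf_succ] at hΔ ⊢
  refine hΔ.collapse hemb rfl (Finset.forall_mem_insert .. |>.2 ⟨.prime_mu hC, ?_⟩)
  exact fun E hE => (forall_closedPositive_iff.2 ⟨hcΔ, hpΔ⟩ E hE).mono hC

/-- Embedding level `j` into level `j + 1` needs collapsing at level `j - 1`, which in turn
needs embedding at level `j - 1`. -/
lemma prevOf_le_succ : ∀ (j : ℕ) (Γ : Sequent), prevOf j Γ → prevOf (j + 1) Γ
  | 0, _, h => h.elim
  | 1, _, h => by
    rw [prevOf_succ] at h ⊢
    exact h.lift (Nat.le_succ 0) (provisoLE_zero _ _)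
  | j + 2, _, h => by
    rw [prevOf_succ] at h ⊢
    exact h.lift (Nat.le_succ _) (provisoLE_prevOf_succ (prevOf_le_succ j))

lemma provisoLE_prevOf : ∀ j : ℕ, ProvisoLE j (prevOf (j + 1)) (prevOf j)
  | 0 => provisoLE_zero _ _
  | j + 1 => provisoLE_prevOf_succ (prevOf_le_succ j)

/-- `Repl F R E E'`: `E'` arises from `E` by replacing some occurrences of `μX.F` that lie
outside every fixed-point operator by formulae satisfying `R`. -/
inductive Repl (F : Form) (R : Form → Prop) : Form → Form → Prop
  | repl {T : Form} : R T → Repl F R (Form.mu F) T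
  | atom (i : ℕ) : Repl F R (Form.atom i) (Form.atom i)
  | natom (i : ℕ) : Repl F R (Form.natom i) (Form.natom i)
  | var : Repl F R Form.var Form.var
  | and {a a' b b' : Form} : Repl F R a a' → Repl F R b b' → Repl F R (a.and b) (a'.and b')
  | or {a a' b b' : Form} : Repl F R a a' → Repl F R b b' → Repl F R (a.or b) (a'.or b')
  | box {a a' : Form} : Repl F R a a' → Repl F R a.box a'.box
  | dia {a a' : Form} : Repl F R a a' → Repl F R a.dia a'.dia
  | mu (C : Form) : Repl F R (Form.mu C) (Form.mu C)
  | nu (C : Form) : Repl F R (Form.nu C) (Form.nu C)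
  | nut (C : Form) : Repl F R (Form.nut C) (Form.nut C)

namespace Repl

variable {F : Form} {R : Form → Prop}

lemma refl (E : Form) : Repl F R E E := by
  induction E with
  | atom i => exact atom i
  | natom i => exact natom i
  | var => exact var
  | and _ _ ha hb => exact and ha hb
  | or _ _ ha hb => exact or ha hb
  | box _ ha => exact box ha
  | dia _ ha => exact dia ha
  | mu C => exact mu C
  | nu C => exact nu C
  | nut C => exact nut C

lemma subst_mu {T : Form} (hT : R T) (E : Form) : Repl F R (E.subst (Form.mu F)) (E.subst T) := by
  induction E with
  | var => exact repl hT
  | and _ _ ha hb => exact and ha hb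
  | or _ _ ha hb => exact or ha hb
  | box _ ha => exact box ha
  | dia _ ha => exact dia ha
  | _ => exact refl _

end Repl

def SeqRepl (F : Form) (R : Form → Prop) (Θ Θ' : Sequent) : Prop :=
  ∀ E ∈ Θ, ∃ E' ∈ Θ', Repl F R E E'

namespace SeqRepl

variable {F : Form} {R : Form → Prop} {Θ Θ' : Sequent}

lemma of_subset (h : Θ ⊆ Θ') : SeqRepl F R Θ Θ' :=
  fun E hE => ⟨E, h hE, Repl.refl E⟩

lemma insert_insert {E E' : Form} (hE : Repl F R E E') (h : SeqRepl F R Θ Θ') :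
    SeqRepl F R (insert E Θ) (insert E' Θ') := by
  refine Finset.forall_mem_insert .. |>.2
    ⟨⟨E', Finset.mem_insert_self .., hE⟩, fun G hG => ?_⟩
  obtain ⟨G', hG', hGG'⟩ := h G hG
  exact ⟨G', Finset.mem_insert_of_mem hG', hGG'⟩

lemma union_left (Δ : Sequent) (h : SeqRepl F R Θ Θ') : SeqRepl F R (Δ ∪ Θ) (Δ ∪ Θ') :=
  Finset.forall_mem_union.2 ⟨fun E hE => ⟨E, Finset.mem_union_left _ hE, Repl.refl E⟩,
    fun E hE => (h E hE).imp fun _ hE' => ⟨Finset.mem_union_right _ hE'.1, hE'.2⟩⟩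

lemma insert_iff {E : Form} :
    SeqRepl F R (insert E Θ) Θ' ↔ (∃ E' ∈ Θ', Repl F R E E') ∧ SeqRepl F R Θ Θ' :=
  Finset.forall_mem_insert ..

lemma of_boxR {Γ S : Sequent} {A : Form}
    (h : SeqRepl F R (Γ.image Form.dia ∪ insert (Form.box A) S) Θ') :
    ∃ A' Γ', Form.box A' ∈ Θ' ∧ Γ'.image Form.dia ⊆ Θ' ∧
      SeqRepl F R (insert A Γ) (insert A' Γ') := by
  classical
  obtain ⟨hΓ, hA⟩ := Finset.forall_mem_union.1 h
  obtain ⟨⟨_, hA', hAA'⟩, -⟩ := (Finset.forall_mem_insert ..).1 hA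
  cases hAA' with | box hAA' => ?_
  refine ⟨_, Θ'.preimage Form.dia fun _ _ _ _ => Form.dia.inj, hA',
    fun _ hE => ?_, SeqRepl.insert_insert hAA' fun E hE => ?_⟩
  · obtain ⟨E, hE', rfl⟩ := Finset.mem_image.1 hE
    exact Finset.mem_preimage.1 hE'
  · obtain ⟨_, hE', hEE'⟩ := hΓ _ (Finset.mem_image_of_mem _ hE)
    cases hEE' with | dia hEE' => exact ⟨_, Finset.mem_preimage.2 hE', hEE'⟩

end SeqRepl

theorem OmDerAux.replace_mu {p p' : Sequent → Prop} {k k' : ℕ} {c : Bool} {A B : Form}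
    {R : Form → Prop} (hk : k ≤ k') (hp : ProvisoLE k p' p)
    (hA : A.IsL0) (hB : B.IsL0) (hBc : B.ClosedF) (hlev : (A.subst B).lev ≤ k')
    (hRB : R B.prime) (hR : ∀ T, R T → OmDerAux p' k' true {(A.subst B).compl.prime, T})
    {Θ : Sequent} (hΘ : OmDerAux p k c Θ) {Θ' : Sequent} (hrepl : SeqRepl A.prime R Θ Θ') :
    OmDerAux p' k' true Θ' := by
  induction hΘ generalizing Θ' with
  | ax _ _ i =>
    obtain ⟨⟨_, hi, hrepl_i⟩, hrepl_Γ⟩ := SeqRepl.insert_iff.1 hrepl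
    obtain ⟨⟨_, hni, hrepl_ni⟩, -⟩ := SeqRepl.insert_iff.1 hrepl_Γ
    cases hrepl_i; cases hrepl_ni
    exact ((ax true Θ' i).of_insert_of_mem_s7 (Finset.mem_insert_of_mem hi)).of_insert_of_mem_s7 hni
  | orR _ _ _ _ _ ih =>
    obtain ⟨⟨_, hG, hrepl_G⟩, hrepl_Γ⟩ := SeqRepl.insert_iff.1 hrepl
    cases hrepl_G with | or h₁ h₂ =>
    exact (orR true Θ' _ _
      (ih ((hrepl_Γ.insert_insert h₂).insert_insert h₁))).of_insert_of_mem_s7 hG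
  | andR _ _ _ _ _ _ ih₁ ih₂ =>
    obtain ⟨⟨_, hG, hrepl_G⟩, hrepl_Γ⟩ := SeqRepl.insert_iff.1 hrepl
    cases hrepl_G with | and h₁ h₂ =>
    exact (andR true Θ' _ _ (ih₁ (hrepl_Γ.insert_insert h₁))
      (ih₂ (hrepl_Γ.insert_insert h₂))).of_insert_of_mem_s7 hG
  | boxR _ _ _ _ _ ih =>
    obtain ⟨A', Γ', hbox, himage, hrepl'⟩ := hrepl.of_boxR
    have := boxR true Γ' Θ' A' (ih hrepl')
    rwa [Finset.insert_eq_of_mem hbox, Finset.union_eq_right.2 himage] at this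
  | clo _ _ C _ ih =>
    obtain ⟨⟨_, hG, hrepl_G⟩, hrepl_Γ⟩ := SeqRepl.insert_iff.1 hrepl
    cases hrepl_G with
    | mu => exact (clo true Θ' C (ih (hrepl_Γ.insert_insert (Repl.refl _)))).of_insert_of_mem_s7 hG
    | repl hT =>
      refine cut_of_mem (Form.isL0_subst hA hB) (Form.closedF_subst_s7 A hBc) hlev ?_ (hR _ hT) hG
      rw [Form.prime_subst_s7]
      exact ih (hrepl_Γ.insert_insert (Repl.subst_mu hRB _))
  | nuR _ _ C _ ih =>
    obtain ⟨⟨_, hG, hrepl_G⟩, hrepl_Γ⟩ := SeqRepl.insert_iff.1 hrepl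
    cases hrepl_G
    exact (nuR true Θ' C fun n => ih n (hrepl_Γ.insert_insert (Repl.refl _))).of_insert_of_mem_s7 hG
  | cut _ C h₁ h₂ h₃ _ _ ih₁ ih₂ =>
    exact cut Θ' C h₁ h₂ (h₃.trans hk) (ih₁ (hrepl.insert_insert (Repl.refl _)))
      (ih₂ (hrepl.insert_insert (Repl.refl _)))
  | omega _ _ C h h₁ h₂ h₃ h₄ _ ih =>
    obtain rfl : C.lev + 1 = h := (Form.lev_prime_compl_mu C).symm.trans h₄
    obtain ⟨⟨_, hG, hrepl_G⟩, hrepl_Γ⟩ := SeqRepl.insert_iff.1 hrepl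
    change Repl _ _ (Form.nut _) _ at hrepl_G
    cases hrepl_G
    exact (omega true Θ' C _ h₁ (h₂.trans hk) h₃ h₄ fun Δ hcΔ hpΔ hΔ =>
      ih Δ hcΔ hpΔ (hp C Δ h₂ hcΔ hpΔ hΔ) (hrepl_Γ.union_left Δ)).of_insert_of_mem_s7 hG
  | omegaT _ _ C h h₁ h₂ h₃ h₄ _ _ ih₀ ih =>
    obtain rfl : C.lev + 1 = h := (Form.lev_prime_compl_mu C).symm.trans h₄
    exact omegaT true Θ' C _ h₁ (h₂.trans hk) h₃ h₄
      (ih₀ (hrepl.insert_insert (Repl.refl _)))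
      fun Δ hcΔ hpΔ hΔ => ih Δ hcΔ hpΔ (hp C Δ h₂ hcΔ hpΔ hΔ) (hrepl.union_left Δ)

/-- if `lev(νX.A) ≤ k`, `B` is an `L0` formula with `lev(B) ≤ k`, and
both `(¬A(B))ʹ, B` and `(¬A(B))ʹ, Bʹ` are derivable in `M^Ω_k`, then both
`(¬μX.A)ʹ, B` and `(¬μX.A)ʹ, Bʹ` are derivable in `M^Ω_k`. -/
theorem stmt7 (k : ℕ) (A B : Form)
    (hA : A.IsL0) (hlevA : Form.lev (Form.nu A) ≤ k)
    (hB : B.IsL0) (hBc : B.ClosedF) (hlevB : B.lev ≤ k)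
    (h1 : OmProv k true {Form.prime (Form.compl (Form.subst A B)), B})
    (h2 : OmProv k true {Form.prime (Form.compl (Form.subst A B)), B.prime}) :
    OmProv k true {Form.prime (Form.compl (Form.mu A)), B} ∧
    OmProv k true {Form.prime (Form.compl (Form.mu A)), B.prime} := by
  have hAk : A.lev + 1 ≤ k := hlevA
  obtain ⟨K, rfl⟩ : ∃ K, k = K + 1 := ⟨k - 1, by omega⟩
  have hlev : (A.subst B).lev ≤ K + 1 := (Form.lev_subst_le_s7 A B).trans (max_le (by omega) hlevB)
  rw [omProv_eq_s7] at h1 h2 ⊢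
  let R : Form → Prop := (· ∈ ({B, B.prime} : Finset Form))
  have hR : ∀ T, R T → OmDerAux (prevOf (K + 1)) (K + 1) true {(A.subst B).compl.prime, T} := by
    simpa [R] using ⟨h1, h2⟩
  have key (T : Form) (hT : R T) :
      OmDerAux (prevOf (K + 1)) (K + 1) true {(Form.mu A).compl.prime, T} := by
    refine .omega true {T} A _ (Nat.succ_pos _) hAk hA (Form.lev_prime_compl_mu A)
      fun Δ _ _ hΔ => ?_
    rw [prevOf_succ] at hΔ
    exact hΔ.replace_mu (Nat.le_succ K) (provisoLE_prevOf K) hA hB hBc hlev (by simp [R]) hR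
      (SeqRepl.insert_iff.2 ⟨⟨T, by simp, .repl hT⟩, .of_subset Finset.subset_union_left⟩)
  exact ⟨key B (by simp [R]), key B.prime (by simp [R])⟩

end OneVarMu
end
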